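/- Let G_w be a weighted bicyclic graph. Then the rank of A(G_w) equals 3 if and only if G_w is isomorphic as a weighted graph to weighted θ(1,0,1) — vertices u, v, x_1, x_2 with edges uv, ux_1, x_1v, ux_2, x_2v — whose weights satisfy w(ux_1)·w(x_2v) = w(ux_2)·w(x_1v). -/

import Mathlib

open Matrix

/-- The positive inertia index of a matrix: the number of positive eigenvalues
(counted with multiplicity) if the matrix is Hermitian, and `0` otherwise. -/
noncomputable def posInertia {k 𝕜 : Type*} [RCLike 𝕜] [Fintype k] [DecidableEq k]
    (A : Matrix k k 𝕜) : ℕ :=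
  if h : A.IsHermitian then Fintype.card {i // 0 < h.eigenvalues i} else 0

/-- The negative inertia index of a matrix. -/
noncomputable def negInertia {k 𝕜 : Type*} [RCLike 𝕜] [Fintype k] [DecidableEq k]
    (A : Matrix k k 𝕜) : ℕ :=
  if h : A.IsHermitian then Fintype.card {i // h.eigenvalues i < 0} else 0

/-- The nullity of a matrix: the number of zero eigenvalues. -/
noncomputable def nulInertia {k 𝕜 : Type*} [RCLike 𝕜] [Fintype k] [DecidableEq k]
    (A : Matrix k k 𝕜) : ℕ :=
  if h : A.IsHermitian then Fintype.card {i // h.eigenvalues i = 0} else 0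

/-- A weighted graph: a simple graph together with a symmetric weight function
which is positive on all edges. -/
structure WeightedGraph (V : Type*) where
  G : SimpleGraph V
  w : V → V → ℝ
  symm : ∀ u v : V, w u v = w v u
  pos : ∀ u v : V, G.Adj u v → 0 < w u v

open Classical in
/-- The (weighted) adjacency matrix of a weighted graph. -/
noncomputable def WeightedGraph.adjMatrix {V : Type*} [Fintype V] [DecidableEq V]
    (W : WeightedGraph V) : Matrix V V ℝ :=
  fun a b => if W.G.Adj a b then W.w a b else 0

/-- `i₊`, the number of positive eigenvalues of the adjacency matrix. -/
noncomputable def WeightedGraph.iPos {V : Type*} [Fintype V] [DecidableEq V]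
    (W : WeightedGraph V) : ℕ := posInertia W.adjMatrix

/-- `i₋`, the number of negative eigenvalues of the adjacency matrix. -/
noncomputable def WeightedGraph.iNeg {V : Type*} [Fintype V] [DecidableEq V]
    (W : WeightedGraph V) : ℕ := negInertia W.adjMatrix

/-- `i₀`, the number of zero eigenvalues of the adjacency matrix. -/
noncomputable def WeightedGraph.iNul {V : Type*} [Fintype V] [DecidableEq V]
    (W : WeightedGraph V) : ℕ := nulInertia W.adjMatrix

/-- A weighted graph is bicyclic if its underlying graph is connected and has
exactly one more edge than vertices. -/
def WeightedGraph.IsBicyclic {V : Type*} [Fintype V] (W : WeightedGraph V) : Prop :=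
  W.G.Connected ∧ W.G.edgeSet.ncard = Fintype.card V + 1

/-- The graph has a pendant vertex (a vertex of degree one). -/
def WeightedGraph.HasPendant {V : Type*} (W : WeightedGraph V) : Prop :=
  ∃ x : V, (W.G.neighborSet x).ncard = 1

/-- The graph has no pendant vertices. -/
def WeightedGraph.NoPendant {V : Type*} (W : WeightedGraph V) : Prop :=
  ∀ x : V, (W.G.neighborSet x).ncard ≠ 1

/-- The base of `G` is (isomorphic to) `H`: some induced subgraph of `G` is
isomorphic to `H`.  (For a bicyclic graph `G` and a bicyclic graph `H` without
pendant vertices this induced subgraph is necessarily the unique base of `G`.) -/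
def BaseIsoTo {V B : Type*} (G : SimpleGraph V) (H : SimpleGraph B) : Prop :=
  ∃ S : Set V, Nonempty ((G.induce S) ≃g H)

/-- Vertex labels of the connecting path of `∞(p,l,q)`: the path starts at the
vertex `0` of the first cycle `0, 1, …, p-1`, and its further vertices are
`p, p+1, …`. -/
def pathVert (p j : ℕ) : ℕ := if j = 0 then 0 else p - 1 + j

/-- Vertex labels of the second cycle of `∞(p,l,q)`: it starts at the last
vertex of the connecting path and continues with `p+l-1, p+l, …`. -/
def infCyc2Vert (p l k : ℕ) : ℕ := if k = 0 then pathVert p (l - 1) else p + l - 2 + k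

/-- The edge relation of `∞(p,l,q)` on the vertex labels `0, …, p+q+l-3`:
the first cycle on `0, …, p-1`, the connecting path (on `l` vertices) from the
vertex `0`, and the second cycle attached at the last path vertex. -/
def infinityRel (p l q a b : ℕ) : Prop :=
  (a + 1 < p ∧ b = a + 1) ∨ (a = 0 ∧ b = p - 1) ∨
  (∃ j, j + 1 < l ∧ a = pathVert p j ∧ b = pathVert p (j + 1)) ∨
  (∃ k, k + 1 < q ∧ a = infCyc2Vert p l k ∧ b = infCyc2Vert p l (k + 1)) ∨
  (a = infCyc2Vert p l 0 ∧ b = infCyc2Vert p l (q - 1))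

/-- The graph `∞(p,l,q)`: two vertex-disjoint cycles of lengths `p` and `q`
joined by a path on `l` vertices (whose endpoints are identified with one
vertex on each cycle).  It has `p + q + l - 2` vertices. -/
def infinityGraph (p l q : ℕ) : SimpleGraph (Fin (p + q + l - 2)) :=
  SimpleGraph.fromRel (fun a b => infinityRel p l q a.1 b.1)

/-- The edge relation of one of the three `u,v`-paths of `θ(p,l,q)` having `m`
internal vertices, the internal vertices being labelled `o, o+1, …, o+m-1`
(`u` is the vertex `0` and `v` is the vertex `1`). -/
def thetaPathRel (m o a b : ℕ) : Prop :=
  if m = 0 then a = 0 ∧ b = 1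
  else (a = 0 ∧ b = o) ∨ (∃ i, i + 1 < m ∧ a = o + i ∧ b = o + i + 1) ∨ (a = o + m - 1 ∧ b = 1)

/-- The graph `θ(p,l,q)`: two vertices `u = 0` and `v = 1` joined by three
internally disjoint paths with `p`, `l`, `q` internal vertices respectively.
It has `p + l + q + 2` vertices. -/
def thetaGraph (p l q : ℕ) : SimpleGraph (Fin (p + l + q + 2)) :=
  SimpleGraph.fromRel (fun a b =>
    thetaPathRel p 2 a.1 b.1 ∨ thetaPathRel l (p + 2) a.1 b.1 ∨
      thetaPathRel q (p + l + 2) a.1 b.1)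

/-- The edge set of `G` is exactly the (symmetrized) list `E`. -/
def adjSpec {V : Type*} (G : SimpleGraph V) (E : List (V × V)) : Prop :=
  ∀ a b : V, G.Adj a b ↔ ((a, b) ∈ E ∨ (b, a) ∈ E)

/-- The weighted subgraph induced on a set `S` of vertices. -/
def WeightedGraph.induce {V : Type*} (W : WeightedGraph V) (S : Set V) : WeightedGraph S where
  G := W.G.induce S
  w := fun a b => W.w a b
  symm := fun a b => W.symm a b
  pos := fun a b h => W.pos a b h

/-- The `k`-th vertex (mod `n`) of a cycle on `Fin n`. -/
def cycVert (n : ℕ) (hn : 0 < n) (k : ℕ) : Fin n := ⟨k % n, Nat.mod_lt _ hn⟩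

/-- `W` is the weighted graph `θ(1,1,1)` (i.e. `K_{2,3}`) with parts `{u, v}`
and `{x1, x2, x3}`. -/
def Theta111Shape {V : Type*} (W : WeightedGraph V) (u v x1 x2 x3 : V) : Prop :=
  [u, v, x1, x2, x3].Nodup ∧ (∀ z : V, z ∈ [u, v, x1, x2, x3]) ∧
    adjSpec W.G [(u, x1), (u, x2), (u, x3), (x1, v), (x2, v), (x3, v)]

/-- `W` is the weighted graph `θ(1,0,1)` on vertices `u, v, x1, x2` with edges
`uv, ux1, x1v, ux2, x2v`. -/
def Theta101Shape {V : Type*} (W : WeightedGraph V) (u v x1 x2 : V) : Prop :=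
  [u, v, x1, x2].Nodup ∧ (∀ z : V, z ∈ [u, v, x1, x2]) ∧
    adjSpec W.G [(u, v), (u, x1), (x1, v), (u, x2), (x2, v)]

/-- `W` is the weighted graph `θ(1,0,2)` on vertices `u, v, x, y, z` with edges
`uv, ux, xv, uy, yz, zv`. -/
def Theta102Shape {V : Type*} (W : WeightedGraph V) (u v x y z : V) : Prop :=
  [u, v, x, y, z].Nodup ∧ (∀ t : V, t ∈ [u, v, x, y, z]) ∧
    adjSpec W.G [(u, v), (u, x), (x, v), (u, y), (y, z), (z, v)]

/-- `W` is the weighted graph `θ(2,0,2)` on vertices `u, v, x1, x2, y1, y2`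
with edges `uv, ux1, x1x2, x2v, uy1, y1y2, y2v`. -/
def Theta202Shape {V : Type*} (W : WeightedGraph V) (u v x1 x2 y1 y2 : V) : Prop :=
  [u, v, x1, x2, y1, y2].Nodup ∧ (∀ t : V, t ∈ [u, v, x1, x2, y1, y2]) ∧
    adjSpec W.G [(u, v), (u, x1), (x1, x2), (x2, v), (u, y1), (y1, y2), (y2, v)]

/-- `W` is the weighted graph `θ(1,1,2)` on vertices `u, v, x1, x2, y1, y2`
with edges `ux1, x1v, ux2, x2v, uy1, y1y2, y2v`. -/
def Theta112Shape {V : Type*} (W : WeightedGraph V) (u v x1 x2 y1 y2 : V) : Prop :=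
  [u, v, x1, x2, y1, y2].Nodup ∧ (∀ t : V, t ∈ [u, v, x1, x2, y1, y2]) ∧
    adjSpec W.G [(u, x1), (x1, v), (u, x2), (x2, v), (u, y1), (y1, y2), (y2, v)]

/-- `W` is the weighted graph `∞(3,1,3)`: two triangles sharing the vertex `c`. -/
def Inf313Shape {V : Type*} (W : WeightedGraph V) (c a1 a2 b1 b2 : V) : Prop :=
  [c, a1, a2, b1, b2].Nodup ∧ (∀ t : V, t ∈ [c, a1, a2, b1, b2]) ∧
    adjSpec W.G [(c, a1), (a1, a2), (a2, c), (c, b1), (b1, b2), (b2, c)]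

/-- `W` is the weighted graph `∞(3,2,3)`: the triangle `u,x,y` and the triangle
`v,s,t`, joined by the edge `uv`. -/
def Inf323Shape {V : Type*} (W : WeightedGraph V) (u v x y s t : V) : Prop :=
  [u, v, x, y, s, t].Nodup ∧ (∀ z : V, z ∈ [u, v, x, y, s, t]) ∧
    adjSpec W.G [(u, x), (x, y), (y, u), (v, s), (s, t), (t, v), (u, v)]

/-- `W` is the weighted graph `∞(3,1,4)`: the triangle `c,x,y` and the
quadrilateral `c,z1,z2,z3` sharing the vertex `c`. -/
def Inf314Shape {V : Type*} (W : WeightedGraph V) (c x y z1 z2 z3 : V) : Prop :=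
  [c, x, y, z1, z2, z3].Nodup ∧ (∀ t : V, t ∈ [c, x, y, z1, z2, z3]) ∧
    adjSpec W.G [(c, x), (x, y), (y, c), (c, z1), (z1, z2), (z2, z3), (z3, c)]

/-- `W` is the weighted graph `∞(4,1,4)`: the quadrilaterals `c,x1,x2,x3` and
`c,y1,y2,y3` sharing the vertex `c`. -/
def Inf414Shape {V : Type*} (W : WeightedGraph V) (c x1 x2 x3 y1 y2 y3 : V) : Prop :=
  [c, x1, x2, x3, y1, y2, y3].Nodup ∧ (∀ t : V, t ∈ [c, x1, x2, x3, y1, y2, y3]) ∧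
    adjSpec W.G [(c, x1), (x1, x2), (x2, x3), (x3, c), (c, y1), (y1, y2), (y2, y3), (y3, c)]

/-! A nonzero principal minor of `A(G_w)` bounds its rank from below. For two edges `ab` and `cd`
with `d` adjacent to neither `a` nor `b`, the principal minor on `a, b, c, d` is
`(w(ab) w(cd))² ≠ 0`; so when the rank is at most `3`, every vertex that lies on an edge is adjacent
to an end of any other edge. The degree sum `2n + 2` of a bicyclic graph provides a vertex `a` of
degree one or two, with neighbours `b, c`, and the previous remark forces every vertex other than
`b, c` to have neighbourhood exactly `{b, c}`. If `b ~ c`, counting degrees gives `n = 4`: the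
graph is `θ(1,0,1)`, whose determinant is `(w(ux₁) w(vx₂) - w(vx₁) w(ux₂))²` and whose triangle
`u v x₁` gives rank at least `3`. If `b ≁ c`, the matrix has the form `[[0, B], [Bᵀ, 0]]` with `B`
of height two, and its rank `2 · rank B` is never `3`. -/

namespace Matrix

variable {R n : Type*} [CommRing R] {A : Matrix n n R}

omit [CommRing R] in
lemma submatrix_vecCons_four (A : Matrix n n R) (a b c d : n) :
    A.submatrix ![a, b, c, d] ![a, b, c, d] =
      !![A a a, A a b, A a c, A a d; A b a, A b b, A b c, A b d;
        A c a, A c b, A c c, A c d; A d a, A d b, A d c, A d d] := by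
  ext i j
  fin_cases i <;> fin_cases j <;> rfl

lemma det_submatrix_three_of_isSymm (hA : A.IsSymm) (hdiag : ∀ i, A i i = 0) (a b c : n) :
    (A.submatrix ![a, b, c] ![a, b, c]).det = 2 * (A a b * A a c * A b c) := by
  rw [det_fin_three]
  simp [hdiag, hA.apply a b, hA.apply a c, hA.apply b c]
  ring

/-- The block `[[X, B], [Bᵀ, 0]]` with `B` square has determinant `det B ^ 2`, whatever `X` is. -/
lemma det_submatrix_four_eq_sq_of_isSymm (hA : A.IsSymm) (hdiag : ∀ i, A i i = 0) (p q r s : n)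
    (hrs : A r s = 0) :
    (A.submatrix ![p, q, r, s] ![p, q, r, s]).det = (A p r * A q s - A q r * A p s) ^ 2 := by
  rw [submatrix_vecCons_four, hA.apply r s, hA.apply p q, hA.apply p r, hA.apply p s,
    hA.apply q r, hA.apply q s, hrs]
  simp [det_succ_row_zero, Fin.sum_univ_succ, Fin.succAbove, hdiag]
  ring

lemma det_submatrix_four_eq_sq_mul_sq_of_isSymm (hA : A.IsSymm)
    (hdiag : ∀ i, A i i = 0) (a b c d : n) (had : A a d = 0) (hbd : A b d = 0) :
    (A.submatrix ![a, b, c, d] ![a, b, c, d]).det = A a b ^ 2 * A c d ^ 2 := by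
  rw [submatrix_vecCons_four, hA.apply a d, hA.apply b d, hA.apply a b, hA.apply a c,
    hA.apply b c, hA.apply c d, had, hbd]
  simp [det_succ_row_zero, Fin.sum_univ_succ, Fin.succAbove, hdiag]
  ring

lemma det_submatrix_of_bijective {m : Type*} [Fintype n] [DecidableEq n] [Fintype m]
    [DecidableEq m] (A : Matrix n n R) {f : m → n} (hf : Function.Bijective f) :
    (A.submatrix f f).det = A.det :=
  det_submatrix_equiv_self (Equiv.ofBijective f hf) A

lemma card_le_rank_of_det_submatrix_ne_zero [IsDomain R] {m : Type*} [Fintype n] [Fintype m]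
    [DecidableEq m] (A : Matrix n n R) (f : m → n) (h : (A.submatrix f f).det ≠ 0) :
    Fintype.card m ≤ A.rank :=
  (rank_of_det_ne_zero h).symm.le.trans (rank_submatrix_le A f f)

section Field

variable {K : Type*} [Field K] [Fintype n]

lemma rank_lt_card_iff_det_eq_zero [DecidableEq n] (A : Matrix n n K) :
    A.rank < Fintype.card n ↔ A.det = 0 := by
  refine ⟨fun h => by_contra fun hdet => h.ne (rank_of_det_ne_zero hdet), fun hdet => ?_⟩
  obtain ⟨x, hx, hAx⟩ := exists_mulVec_eq_zero_iff.mpr hdet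
  have hker : 0 < Module.finrank K (LinearMap.ker A.mulVecLin) :=
    Module.finrank_pos_iff_exists_ne_zero.mpr ⟨⟨x, hAx⟩, fun h => hx (congrArg Subtype.val h)⟩
  have := LinearMap.finrank_range_add_finrank_ker A.mulVecLin
  rw [Module.finrank_fintype_fun_eq_card] at this
  unfold rank
  omega

lemma rank_add_le (A B : Matrix n n K) : (A + B).rank ≤ A.rank + B.rank := by
  have h : LinearMap.range (A + B).mulVecLin ≤
      LinearMap.range A.mulVecLin ⊔ LinearMap.range B.mulVecLin := by
    rintro _ ⟨y, rfl⟩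
    rw [mulVecLin_add]
    exact Submodule.add_mem_sup ⟨y, rfl⟩ ⟨y, rfl⟩
  exact (Submodule.finrank_mono h).trans (Submodule.finrank_add_le_finrank_add_finrank _ _)

theorem rank_ne_three_of_isSymm_of_eq_zero [DecidableEq n] {A : Matrix n n K} (hA : A.IsSymm)
    {a b c : n} (hab : A a b ≠ 0) (hzero : ∀ x y, (x = b ∨ x = c ↔ y = b ∨ y = c) → A x y = 0) :
    A.rank ≠ 3 := by
  have hdiag : ∀ i, A i i = 0 := fun i => hzero i i Iff.rfl
  by_cases hminor : ∃ p q, A p b * A q c - A q b * A p c ≠ 0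
  · obtain ⟨p, q, hpq⟩ := hminor
    have hdet : (A.submatrix ![p, q, b, c] ![p, q, b, c]).det ≠ 0 := by
      rw [det_submatrix_four_eq_sq_of_isSymm hA hdiag p q b c (hzero b c (by simp))]
      exact pow_ne_zero 2 hpq
    have := card_le_rank_of_det_submatrix_ne_zero A _ hdet
    simp only [Fintype.card_fin] at this
    omega
  · simp only [not_exists, not_not] at hminor
    have ha : ¬(a = b ∨ a = c) := fun h => hab (hzero a b (by simp [h]))
    -- `B` has rank one: its rows are multiples of the row of `a`.
    set r : n → K := fun x => if x = b ∨ x = c then 0 else A x b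
    set s : n → K := fun y => if y = b ∨ y = c then A a y / A a b else 0
    have hrow : ∀ x y, (y = b ∨ y = c) → A x y * A a b = A x b * A a y := by
      rintro x y (rfl | rfl)
      · ring
      · linear_combination -(hminor x a)
    have hrs : A = vecMulVec r s + vecMulVec s r := by
      ext x y
      by_cases hx : x = b ∨ x = c <;> by_cases hy : y = b ∨ y = c <;>
        simp only [add_apply, vecMulVec_apply, r, s, hx, hy, if_true, if_false, mul_zero,
          zero_mul, add_zero, zero_add]
      · exact hzero x y (iff_of_true hx hy)
      · rw [hA.apply y x]
        field_simp
        linear_combination hrow y x hx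
      · field_simp
        linear_combination hrow x y hy
      · exact hzero x y (iff_of_false hx hy)
    have h1 := rank_vecMulVec_le r s
    have h2 := rank_vecMulVec_le s r
    have := rank_add_le (vecMulVec r s) (vecMulVec s r)
    rw [← hrs] at this
    omega

end Field

end Matrix

namespace WeightedGraph

variable {V : Type*} [Fintype V] {W : WeightedGraph V}

namespace IsBicyclic

variable (h : W.IsBicyclic)
include h

lemma card_edgeFinset [Fintype W.G.edgeSet] : W.G.edgeFinset.card = Fintype.card V + 1 := by
  rw [← h.2, ← SimpleGraph.coe_edgeFinset, Set.ncard_coe_finset]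

lemma three_le_card : 3 ≤ Fintype.card V := by
  classical
  have := h.card_edgeFinset ▸ W.G.card_edgeFinset_le_card_choose_two
  by_contra! hlt
  interval_cases Fintype.card V <;> simp at this

lemma exists_adj (v : V) : ∃ s, W.G.Adj v s := by
  obtain ⟨u, hu⟩ := Fintype.exists_ne_of_one_lt_card (by have := h.three_le_card; omega) v
  exact (h.1.preconnected v u).nonempty_neighborSet_left hu.symm

lemma sum_degrees [DecidableRel W.G.Adj] :
    ∑ v, W.G.degree v = 2 * (Fintype.card V + 1) := by
  rw [SimpleGraph.sum_degrees_eq_twice_card_edges, h.card_edgeFinset]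

lemma exists_adj_iff : ∃ a b c : V, ∀ y, W.G.Adj a y ↔ y = b ∨ y = c := by
  classical
  have h3 := h.three_le_card
  obtain ⟨a, ha⟩ : ∃ a, W.G.degree a ≤ 2 := by
    by_contra! hdeg
    have := Finset.card_nsmul_le_sum Finset.univ (fun v => W.G.degree v) 3 fun v _ => hdeg v
    simp only [Finset.card_univ, smul_eq_mul, h.sum_degrees] at this
    omega
  have hpos := (W.G.degree_pos_iff_exists_adj a).2 (h.exists_adj a)
  obtain h1 | h2 : W.G.degree a = 1 ∨ W.G.degree a = 2 := by omega
  · obtain ⟨b, hb⟩ := Finset.card_eq_one.1 h1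
    exact ⟨a, b, b, fun y => by rw [← SimpleGraph.mem_neighborFinset, hb]; simp⟩
  · obtain ⟨b, c, -, hbc⟩ := Finset.card_eq_two.1 h2
    exact ⟨a, b, c, fun y => by rw [← SimpleGraph.mem_neighborFinset, hbc]; simp⟩

lemma card_eq_four_of_adj {b c : V} (hbc : W.G.Adj b c)
    (hstruct : ∀ x, x ≠ b → x ≠ c → ∀ y, W.G.Adj x y ↔ y = b ∨ y = c) :
    Fintype.card V = 4 := by
  classical
  set n := Fintype.card V
  have h3 := h.three_le_card
  have huniv : ∀ z, z = b ∨ z = c → W.G.degree z = n - 1 := by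
    intro z hz
    rw [SimpleGraph.degree_eq_card_sub_one]
    intro w hzw
    by_cases hw : w = b ∨ w = c
    · rcases hz with rfl | rfl <;> rcases hw with rfl | rfl <;>
        first | exact absurd rfl hzw | exact hbc | exact hbc.symm
    · rw [not_or] at hw
      exact ((hstruct w hw.1 hw.2 z).2 hz).symm
  have hdeg : ∀ x, W.G.degree x =
      2 + (if x = b then n - 3 else 0) + (if x = c then n - 3 else 0) := by
    intro x
    by_cases hxb : x = b
    · subst hxb
      rw [huniv _ (Or.inl rfl)]
      simp only [if_true, hbc.ne, if_false]
      omega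
    by_cases hxc : x = c
    · subst hxc
      rw [huniv _ (Or.inr rfl)]
      simp only [if_true, hbc.ne', if_false]
      omega
    have : W.G.neighborFinset x = {b, c} := by
      ext y
      simp [hstruct x hxb hxc y]
    rw [← SimpleGraph.card_neighborFinset_eq_degree, this, Finset.card_pair hbc.ne]
    simp [hxb, hxc]
  have := h.sum_degrees
  simp only [hdeg, Finset.sum_add_distrib, Finset.sum_const, Finset.sum_ite_eq',
    Finset.mem_univ, if_true, Finset.card_univ, smul_eq_mul] at this
  omega

end IsBicyclic

variable [DecidableEq V]

lemma adjMatrix_of_adj {a b : V} (h : W.G.Adj a b) : W.adjMatrix a b = W.w a b := if_pos h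

lemma adjMatrix_of_not_adj {a b : V} (h : ¬W.G.Adj a b) : W.adjMatrix a b = 0 := if_neg h

variable (W) in
lemma adjMatrix_self (a : V) : W.adjMatrix a a = 0 := adjMatrix_of_not_adj (W.G.irrefl)

variable (W) in
lemma isSymm_adjMatrix : W.adjMatrix.IsSymm := by
  ext a b
  by_cases h : W.G.Adj a b
  · rw [transpose_apply, adjMatrix_of_adj h, adjMatrix_of_adj h.symm, W.symm]
  · rw [transpose_apply, adjMatrix_of_not_adj h,
      adjMatrix_of_not_adj (mt SimpleGraph.Adj.symm h)]

lemma adjMatrix_ne_zero {a b : V} (h : W.G.Adj a b) : W.adjMatrix a b ≠ 0 := by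
  rw [adjMatrix_of_adj h]
  exact (W.pos a b h).ne'

lemma adj_or_adj_of_rank_le_three (hr : W.adjMatrix.rank ≤ 3) {a b c d : V}
    (hab : W.G.Adj a b) (hcd : W.G.Adj c d) :
    W.G.Adj a d ∨ W.G.Adj b d := by
  by_contra h
  rw [not_or] at h
  have hdet : (W.adjMatrix.submatrix ![a, b, c, d] ![a, b, c, d]).det ≠ 0 := by
    rw [det_submatrix_four_eq_sq_mul_sq_of_isSymm W.isSymm_adjMatrix W.adjMatrix_self a b c d
      (adjMatrix_of_not_adj h.1) (adjMatrix_of_not_adj h.2)]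
    exact mul_ne_zero (pow_ne_zero 2 (adjMatrix_ne_zero hab))
      (pow_ne_zero 2 (adjMatrix_ne_zero hcd))
  have := card_le_rank_of_det_submatrix_ne_zero _ _ hdet
  simp only [Fintype.card_fin] at this
  omega

theorem adj_iff_of_rank_le_three (hr : W.adjMatrix.rank ≤ 3) (hW : ∀ x, ∃ s, W.G.Adj x s)
    {a b c : V} (ha : ∀ y, W.G.Adj a y ↔ y = b ∨ y = c) :
    ∀ x, x ≠ b → x ≠ c → ∀ y, W.G.Adj x y ↔ y = b ∨ y = c := by
  intro x hxb hxc y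
  obtain ⟨s, hxs⟩ := hW x
  have hab : W.G.Adj a b := (ha b).2 (Or.inl rfl)
  have hax : ¬W.G.Adj a x := fun hax => ((ha x).1 hax).elim hxb hxc
  have hbx : W.G.Adj b x := (adj_or_adj_of_rank_le_three hr hab hxs.symm).resolve_left hax
  have hcx : W.G.Adj c x :=
    (adj_or_adj_of_rank_le_three hr ((ha c).2 (Or.inr rfl)) hxs.symm).resolve_left hax
  refine ⟨fun hxy => by_contra fun hy => ?_, by rintro (rfl | rfl); exacts [hbx.symm, hcx.symm]⟩
  rcases adj_or_adj_of_rank_le_three hr hxy.symm hab.symm with hya | hxa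
  · exact hy ((ha y).1 hya.symm)
  · exact hax hxa.symm

theorem rank_ne_three_of_not_adj {a b c : V} (hab : W.G.Adj a b) (hbc : ¬W.G.Adj b c)
    (hstruct : ∀ x, x ≠ b → x ≠ c → ∀ y, W.G.Adj x y ↔ y = b ∨ y = c) :
    W.adjMatrix.rank ≠ 3 := by
  refine rank_ne_three_of_isSymm_of_eq_zero (c := c) W.isSymm_adjMatrix (adjMatrix_ne_zero hab)
    fun x y hxy => adjMatrix_of_not_adj fun hadj => ?_
  by_cases hx : x = b ∨ x = c
  · have hy := hxy.1 hx
    rcases hx with rfl | rfl <;> rcases hy with rfl | rfl <;>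
      first | exact W.G.irrefl hadj | exact hbc hadj | exact hbc hadj.symm
  · have hx' := not_or.1 hx
    exact hx (hxy.2 ((hstruct x hx'.1 hx'.2 y).1 hadj))

end WeightedGraph

open WeightedGraph

namespace Theta101Shape

variable {V : Type*} {W : WeightedGraph V} {u v x1 x2 : V}

lemma bijective (hT : Theta101Shape W u v x1 x2) : Function.Bijective ![u, v, x1, x2] := by
  have : ![u, v, x1, x2] = [u, v, x1, x2].get := by
    funext i
    fin_cases i <;> rfl
  rw [this]
  exact ⟨List.nodup_iff_injective_get.1 hT.1, fun z => List.mem_iff_get.1 (hT.2.1 z)⟩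

variable [Fintype V] [DecidableEq V]

theorem rank_eq_three_iff (hT : Theta101Shape W u v x1 x2) :
    W.adjMatrix.rank = 3 ↔ W.w u x1 * W.w x2 v = W.w u x2 * W.w x1 v := by
  have hf := hT.bijective
  obtain ⟨hnd, -, hadj⟩ := hT
  simp at hnd
  obtain ⟨⟨huv, hux1, hux2⟩, ⟨hvx1, hvx2⟩, hx12⟩ := hnd
  have huv' : W.G.Adj u v := (hadj u v).2 (by simp)
  have hux1' : W.G.Adj u x1 := (hadj u x1).2 (by simp)
  have hux2' : W.G.Adj u x2 := (hadj u x2).2 (by simp)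
  have hvx1' : W.G.Adj v x1 := (hadj v x1).2 (by simp)
  have hvx2' : W.G.Adj v x2 := (hadj v x2).2 (by simp)
  have hx12' : ¬W.G.Adj x1 x2 := fun h => by
    simpa [huv, hux1, hux2, hvx1, hvx2, hx12, Ne.symm hux1, Ne.symm hux2, Ne.symm hvx1,
      Ne.symm hvx2, Ne.symm hx12] using (hadj x1 x2).1 h
  have hcard : Fintype.card V = 4 := by simpa using (Fintype.card_of_bijective hf).symm
  have hrank : 3 ≤ W.adjMatrix.rank := by
    have hdet : (W.adjMatrix.submatrix ![u, v, x1] ![u, v, x1]).det ≠ 0 := by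
      rw [det_submatrix_three_of_isSymm W.isSymm_adjMatrix W.adjMatrix_self]
      exact mul_ne_zero two_ne_zero (mul_ne_zero (mul_ne_zero (adjMatrix_ne_zero huv')
        (adjMatrix_ne_zero hux1')) (adjMatrix_ne_zero hvx1'))
    simpa using card_le_rank_of_det_submatrix_ne_zero _ _ hdet
  have hdet : W.adjMatrix.det = (W.w u x1 * W.w v x2 - W.w v x1 * W.w u x2) ^ 2 := by
    rw [← det_submatrix_of_bijective _ hf, det_submatrix_four_eq_sq_of_isSymm W.isSymm_adjMatrix
      W.adjMatrix_self _ _ _ _ (adjMatrix_of_not_adj hx12'), adjMatrix_of_adj hux1',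
      adjMatrix_of_adj hux2', adjMatrix_of_adj hvx1', adjMatrix_of_adj hvx2']
  calc W.adjMatrix.rank = 3 ↔ W.adjMatrix.rank < Fintype.card V := by
        have := W.adjMatrix.rank_le_card_width
        omega
    _ ↔ W.adjMatrix.det = 0 := rank_lt_card_iff_det_eq_zero _
    _ ↔ W.w u x1 * W.w x2 v = W.w u x2 * W.w x1 v := by
        rw [hdet, pow_eq_zero_iff two_ne_zero, sub_eq_zero, W.symm x2 v, W.symm x1 v,
          mul_comm (W.w v x1)]

end Theta101Shape

namespace WeightedGraph

variable {V : Type*} [Fintype V] [DecidableEq V] {W : WeightedGraph V}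

lemma exists_theta101Shape_of_card_eq_four (h4 : Fintype.card V = 4) {a b c : V}
    (hab : W.G.Adj a b) (hac : W.G.Adj a c) (hbc : W.G.Adj b c)
    (hstruct : ∀ x, x ≠ b → x ≠ c → ∀ y, W.G.Adj x y ↔ y = b ∨ y = c) :
    ∃ d, Theta101Shape W b c a d := by
  obtain ⟨d, hd⟩ : ∃ d, d ∉ ({a, b, c} : Finset V) := by
    by_contra! h
    have hle := Finset.card_le_card (s := Finset.univ) fun x _ => h x
    rw [Finset.card_univ, h4] at hle
    have := Finset.card_le_three (a := a) (b := b) (c := c)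
    omega
  simp only [Finset.mem_insert, Finset.mem_singleton, not_or] at hd
  obtain ⟨hda, hdb, hdc⟩ := hd
  have hnd : [b, c, a, d].Nodup := by
    simp [hbc.ne, hab.ne', hac.ne', Ne.symm hda, Ne.symm hdb, Ne.symm hdc]
  have hbij : Function.Bijective [b, c, a, d].get :=
    (Fintype.bijective_iff_injective_and_card _).2
      ⟨List.nodup_iff_injective_get.1 hnd, by simp [h4]⟩
  have hmem : ∀ z, z ∈ [b, c, a, d] := fun z => List.mem_iff_get.2 (hbij.2 z)
  refine ⟨d, hnd, hmem, fun z y => ?_⟩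
  have ha := hstruct a hab.ne hac.ne
  have hd := hstruct d hdb hdc
  have hbd : W.G.Adj b d := ((hd b).2 (Or.inl rfl)).symm
  have hcd : W.G.Adj c d := ((hd c).2 (Or.inr rfl)).symm
  have hz := hmem z
  have hy := hmem y
  simp only [List.mem_cons, List.not_mem_nil, or_false] at hz hy
  rcases hz with rfl | rfl | rfl | rfl <;> rcases hy with rfl | rfl | rfl | rfl <;>
    simp [ha, hd, hbc, hab.symm, hac.symm, hbc.symm, hbd, hcd, hab.ne, hac.ne, hbc.ne, hab.ne',
      hac.ne', hbc.ne', hda, hdb, hdc, Ne.symm hda, Ne.symm hdb, Ne.symm hdc]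

end WeightedGraph

/-- the weighted bicyclic graphs of rank `3`. -/
theorem stmt12 {V : Type*} [Fintype V] [DecidableEq V] (W : WeightedGraph V)
    (hbic : W.IsBicyclic) :
    W.adjMatrix.rank = 3 ↔
      (∃ u v x1 x2 : V, Theta101Shape W u v x1 x2 ∧
        W.w u x1 * W.w x2 v = W.w u x2 * W.w x1 v) := by
  refine ⟨fun hrank => ?_, fun ⟨u, v, x1, x2, hT, hw⟩ => hT.rank_eq_three_iff.2 hw⟩
  obtain ⟨a, b, c, ha⟩ := hbic.exists_adj_iff
  have hstruct := adj_iff_of_rank_le_three hrank.le hbic.exists_adj ha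
  have hab : W.G.Adj a b := (ha b).2 (Or.inl rfl)
  by_cases hbc : W.G.Adj b c
  · obtain ⟨d, hT⟩ := exists_theta101Shape_of_card_eq_four
      (hbic.card_eq_four_of_adj hbc hstruct) hab ((ha c).2 (Or.inr rfl)) hbc hstruct
    exact ⟨b, c, a, d, hT, hT.rank_eq_three_iff.1 hrank⟩
  · exact absurd hrank (rank_ne_three_of_not_adj hab hbc hstruct)
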